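/- Let G be a noncomplete connected graph. Then tmc(G) ≤ mc(G) + l(G). -/

import Mathlib

open SimpleGraph

/-- A walk is a *total monochromatic path* (w.r.t. a vertex coloring `vcol` and an
edge coloring `ecol`) if it is a path and all its edges and internal vertices
share one common color. -/
def IsTMCPath {V : Type*} (G : SimpleGraph V) (vcol : V → ℕ) (ecol : Sym2 V → ℕ)
    {u v : V} (p : G.Walk u v) : Prop :=
  p.IsPath ∧ ∃ c : ℕ, (∀ e ∈ p.edges, ecol e = c) ∧
    ∀ w ∈ p.support, w ≠ u → w ≠ v → vcol w = c

/-- A total coloring (vertex coloring `vcol` together with edge coloring `ecol`) is a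
*TMC-coloring* if any two vertices are connected by a total monochromatic path. -/
def IsTMCColoring {V : Type*} (G : SimpleGraph V) (vcol : V → ℕ) (ecol : Sym2 V → ℕ) : Prop :=
  ∀ u v : V, ∃ p : G.Walk u v, IsTMCPath G vcol ecol p

/-- The number of colors used by a total coloring: colors on vertices together with
colors on (actual) edges of `G`. -/
noncomputable def totalColorsUsed {V : Type*} (G : SimpleGraph V)
    (vcol : V → ℕ) (ecol : Sym2 V → ℕ) : ℕ :=
  (Set.range vcol ∪ ecol '' G.edgeSet).ncard

/-- The total monochromatic connection number `tmc G`: the maximum number of colors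
used in a TMC-coloring of `G`. -/
noncomputable def tmc {V : Type*} (G : SimpleGraph V) : ℕ :=
  sSup { k | ∃ vcol ecol, IsTMCColoring G vcol ecol ∧ totalColorsUsed G vcol ecol = k }

/-- An edge coloring is an *MC-coloring* if any two vertices are connected by a
monochromatic path (all edges of one color). -/
def IsMCColoring {V : Type*} (G : SimpleGraph V) (ecol : Sym2 V → ℕ) : Prop :=
  ∀ u v : V, ∃ p : G.Walk u v, p.IsPath ∧ ∃ c : ℕ, ∀ e ∈ p.edges, ecol e = c

/-- The monochromatic connection number `mc G`. -/
noncomputable def mc {V : Type*} (G : SimpleGraph V) : ℕ :=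
  sSup { k | ∃ ecol : Sym2 V → ℕ, IsMCColoring G ecol ∧ (ecol '' G.edgeSet).ncard = k }

/-- A vertex coloring is an *MVC-coloring* if any two vertices are connected by a
vertex-monochromatic path (all internal vertices of one color). -/
def IsMVCColoring {V : Type*} (G : SimpleGraph V) (vcol : V → ℕ) : Prop :=
  ∀ u v : V, ∃ p : G.Walk u v, p.IsPath ∧ ∃ c : ℕ,
    ∀ w ∈ p.support, w ≠ u → w ≠ v → vcol w = c

/-- The monochromatic vertex connection number `mvc G`. -/
noncomputable def mvc {V : Type*} (G : SimpleGraph V) : ℕ :=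
  sSup { k | ∃ vcol : V → ℕ, IsMVCColoring G vcol ∧ (Set.range vcol).ncard = k }

/-- The number of leaves (vertices of degree one) of a graph. -/
noncomputable def leafCount {V : Type*} (G : SimpleGraph V) : ℕ :=
  {v : V | (G.neighborSet v).ncard = 1}.ncard

/-- `maxLeaves G = l(G)`: the maximum number of leaves over all spanning trees of `G`. -/
noncomputable def maxLeaves {V : Type*} (G : SimpleGraph V) : ℕ :=
  sSup { k | ∃ T : SimpleGraph V, T ≤ G ∧ T.IsTree ∧ leafCount T = k }

/-!
An internal vertex of a total monochromatic path has the colour of the path's edges, so in a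
TMC-colouring every internal vertex of a connecting path lies in the set `A` of vertices coloured
with edge colours. The edge colouring alone is an MC-colouring, giving at most `mc G` edge
colours. Since `G` is not complete, two nonadjacent vertices need an internal vertex, so `A` is
nonempty, and then it is a connected dominating set. Attaching every vertex outside `A` to one
neighbour in `A` yields a spanning tree in which all of them are leaves, so the vertex colours
that are not edge colours number at most `l(G)`.
-/

namespace SimpleGraph

variable {V : Type*} {G : SimpleGraph V} {A : Set V}

def attachOutside (G : SimpleGraph V) (A : Set V) (f : V → V) : SimpleGraph V where
  Adj x y := G.Adj x y ∧ (x ∈ A ∧ y ∈ A ∨ x ∉ A ∧ y = f x ∨ y ∉ A ∧ x = f y)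
  symm := ⟨fun _ _ h => ⟨h.1.symm, by tauto⟩⟩
  loopless := ⟨fun _ h => G.irrefl h.1⟩

lemma attachOutside_adj {f : V → V} {x y : V} : (G.attachOutside A f).Adj x y ↔
    G.Adj x y ∧ (x ∈ A ∧ y ∈ A ∨ x ∉ A ∧ y = f x ∨ y ∉ A ∧ x = f y) :=
  Iff.rfl

lemma attachOutside_le (f : V → V) : G.attachOutside A f ≤ G := fun _ _ h => h.1

lemma neighborSet_attachOutside_of_notMem {f : V → V} (hf : ∀ s ∉ A, f s ∈ A ∧ G.Adj s (f s))
    {s : V} (hs : s ∉ A) : (G.attachOutside A f).neighborSet s = {f s} := by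
  ext y
  constructor
  · rw [mem_neighborSet, attachOutside_adj]
    rintro ⟨-, ⟨hsA, -⟩ | ⟨-, rfl⟩ | ⟨hy, rfl⟩⟩
    · exact absurd hsA hs
    · rfl
    · exact absurd (hf y hy).1 hs
  · rintro rfl
    exact attachOutside_adj.mpr ⟨(hf s hs).2, Or.inr (Or.inl ⟨hs, rfl⟩)⟩

lemma connected_attachOutside (hA : (G.induce A).Connected) {f : V → V}
    (hf : ∀ s ∉ A, f s ∈ A ∧ G.Adj s (f s)) : (G.attachOutside A f).Connected := by
  let φ : G.induce A →g G.attachOutside A f :=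
    ⟨Subtype.val, fun {a b} h => attachOutside_adj.mpr ⟨h, Or.inl ⟨a.2, b.2⟩⟩⟩
  have hrep : ∀ x, ∃ a : A, (G.attachOutside A f).Reachable x a := by
    intro x
    by_cases hx : x ∈ A
    · exact ⟨⟨x, hx⟩, .rfl⟩
    · refine ⟨⟨f x, (hf x hx).1⟩, Adj.reachable ?_⟩
      exact attachOutside_adj.mpr ⟨(hf x hx).2, Or.inr (Or.inl ⟨hx, rfl⟩)⟩
  have : Nonempty V := hA.nonempty.map Subtype.val
  refine .mk fun x y => ?_
  obtain ⟨a, hxa⟩ := hrep x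
  obtain ⟨b, hyb⟩ := hrep y
  exact hxa.trans (((hA.preconnected a b).map φ).trans hyb.symm)

lemma exists_isTree_le_forall_notMem_leaf (hA : (G.induce A).Connected)
    (hdom : ∀ s ∉ A, ∃ a ∈ A, G.Adj s a) :
    ∃ T ≤ G, T.IsTree ∧ ∀ s ∉ A, (T.neighborSet s).ncard = 1 := by
  choose! f hf using hdom
  obtain ⟨T, hTH, hT⟩ := (connected_attachOutside hA hf).exists_isTree_le
  refine ⟨T, hTH.trans (attachOutside_le f), hT, fun s hs => ?_⟩
  have hsub : T.neighborSet s ⊆ {f s} :=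
    neighborSet_attachOutside_of_notMem hf hs ▸ fun y hy => hTH hy
  have hne : (T.neighborSet s).Nonempty :=
    (hT.connected.preconnected s (f s)).nonempty_neighborSet_left
      fun h => hs (h ▸ (hf s hs).1)
  rw [hne.subset_singleton_iff.mp hsub, Set.ncard_singleton]

def ConnectsThrough (G : SimpleGraph V) (A : Set V) : Prop :=
  ∀ u v, ∃ p : G.Walk u v, ∀ w ∈ p.support, w ≠ u → w ≠ v → w ∈ A

namespace ConnectsThrough

lemma nonempty_of_ne_top (h : G.ConnectsThrough A) (hG : G ≠ ⊤) : A.Nonempty := by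
  obtain ⟨u, v, huv, hnadj⟩ : ∃ u v, u ≠ v ∧ ¬G.Adj u v := by
    by_contra! hall
    exact hG (eq_top_iff.mpr fun u v huv => hall u v huv)
  obtain ⟨p, hp⟩ := h u v
  cases p with
  | nil => exact absurd rfl huv
  | @cons _ x _ hux q =>
    refine ⟨x, hp x (by simp) hux.ne' ?_⟩
    rintro rfl
    exact hnadj hux

lemma induce_connected (h : G.ConnectsThrough A) (hA : A.Nonempty) : (G.induce A).Connected := by
  have : Nonempty A := hA.to_subtype
  refine .mk fun ⟨a, ha⟩ ⟨b, hb⟩ => ?_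
  obtain ⟨p, hp⟩ := h a b
  have hsupp : ∀ w ∈ p.support, w ∈ A := fun w hw => by
    by_cases hwa : w = a
    · exact hwa ▸ ha
    by_cases hwb : w = b
    · exact hwb ▸ hb
    exact hp w hw hwa hwb
  exact (p.induce A hsupp).reachable

lemma exists_adj_mem (h : G.ConnectsThrough A) (hA : A.Nonempty) :
    ∀ s ∉ A, ∃ a ∈ A, G.Adj s a := by
  intro s hs
  obtain ⟨a, ha⟩ := hA
  obtain ⟨p, hp⟩ := h s a
  cases p with
  | nil => exact absurd ha hs
  | @cons _ x _ hsx q =>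
    by_cases hxa : x = a
    · exact ⟨a, ha, hxa ▸ hsx⟩
    · exact ⟨x, hp x (by simp) hsx.ne' hxa, hsx⟩

end ConnectsThrough

end SimpleGraph

section Coloring

variable {V : Type*} {G : SimpleGraph V} {vcol : V → ℕ} {ecol : Sym2 V → ℕ}

lemma IsTMCPath.color_mem_of_internal {u v : V} {p : G.Walk u v} (hp : IsTMCPath G vcol ecol p)
    {w : V} (hw : w ∈ p.support) (hwu : w ≠ u) (hwv : w ≠ v) : vcol w ∈ ecol '' G.edgeSet := by
  obtain ⟨-, c, hedge, hvert⟩ := hp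
  cases p with
  | nil => exact absurd (by simpa using hw) hwu
  | @cons _ x _ hux q =>
    have he : s(u, x) ∈ (Walk.cons hux q).edges := by simp
    exact ⟨s(u, x), Walk.edges_subset_edgeSet _ he, (hedge _ he).trans (hvert w hw hwu hwv).symm⟩

lemma IsTMCColoring.connectsThrough (h : IsTMCColoring G vcol ecol) :
    G.ConnectsThrough (vcol ⁻¹' (ecol '' G.edgeSet)) := fun u v =>
  let ⟨p, hp⟩ := h u v
  ⟨p, fun _ hw hwu hwv => hp.color_mem_of_internal hw hwu hwv⟩

lemma IsTMCColoring.isMCColoring (h : IsTMCColoring G vcol ecol) : IsMCColoring G ecol :=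
  fun u v =>
  let ⟨p, hp, c, hedge, _⟩ := h u v
  ⟨p, hp, c, hedge⟩

lemma IsMCColoring.ncard_le_mc [Finite V] (h : IsMCColoring G ecol) :
    (ecol '' G.edgeSet).ncard ≤ mc G :=
  le_csSup ⟨G.edgeSet.ncard, by rintro _ ⟨e, -, rfl⟩; exact Set.ncard_image_le (Set.toFinite _)⟩
    ⟨ecol, h, rfl⟩

lemma leafCount_le_maxLeaves [Finite V] {T : SimpleGraph V} (hTG : T ≤ G) (hT : T.IsTree) :
    leafCount T ≤ maxLeaves G :=
  le_csSup ⟨Nat.card V, by rintro _ ⟨T', -, -, rfl⟩; exact Set.ncard_le_card _⟩ ⟨T, hTG, hT, rfl⟩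

lemma ncard_range_diff_le {α β : Type*} [Finite α] (f : α → β) (B : Set β) {S : Set α}
    (hS : ∀ a, f a ∉ B → a ∈ S) : (Set.range f \ B).ncard ≤ S.ncard :=
  calc (Set.range f \ B).ncard ≤ (f '' S).ncard :=
        Set.ncard_le_ncard (by rintro _ ⟨⟨a, rfl⟩, ha⟩; exact ⟨a, hS a ha, rfl⟩) (Set.toFinite _)
    _ ≤ S.ncard := Set.ncard_image_le (Set.toFinite _)

end Coloring

theorem stmt_18_general {V : Type*} [Fintype V] (G : SimpleGraph V)
    (hnc : G ≠ ⊤) : tmc G ≤ mc G + maxLeaves G := by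
  refine csSup_le' ?_
  rintro _ ⟨vcol, ecol, hcol, rfl⟩
  set B := ecol '' G.edgeSet
  have hthrough := hcol.connectsThrough
  have hA := hthrough.nonempty_of_ne_top hnc
  obtain ⟨T, hTG, hT, hleaf⟩ := exists_isTree_le_forall_notMem_leaf
    (hthrough.induce_connected hA) (hthrough.exists_adj_mem hA)
  calc totalColorsUsed G vcol ecol = (B ∪ (Set.range vcol \ B)).ncard := by
        rw [totalColorsUsed, Set.union_sdiff_self, Set.union_comm]
    _ ≤ B.ncard + (Set.range vcol \ B).ncard := Set.ncard_union_le _ _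
    _ ≤ mc G + leafCount T :=
        add_le_add hcol.isMCColoring.ncard_le_mc (ncard_range_diff_le vcol B (hleaf ·))
    _ ≤ mc G + maxLeaves G := Nat.add_le_add_left (leafCount_le_maxLeaves hTG hT) _

/-- For a noncomplete connected graph `G`, `tmc(G) ≤ mc(G) + l(G)`. -/
theorem stmt_18 {V : Type*} [Fintype V] (G : SimpleGraph V) (hG : G.Connected)
    (hnc : G ≠ ⊤) : tmc G ≤ mc G + maxLeaves G :=
  stmt_18_general G hnc
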